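/- Soundness of LP-Struct: if F(Φ) ⊢ {A[y]} (→^ν·↪^1)*_γ ∅, i.e. the query A[y] (y fresh) succeeds by LP-Struct reduction under the transformed program with final accumulated substitution γ, then there exists a proof term e such that e : ∀x̄. ⇒ γ(A[y]) is derivable from F(Φ) in the Horn-formulas-as-types system. -/

import Mathlib

namespace SRes

/-- First-order terms: variables and function symbols applied to lists of terms. -/
inductive Tm : Type where
  | var : ℕ → Tm
  | fn : ℕ → List Tm → Tm

/-- First-order substitutions. -/
abbrev Subst := ℕ → Tm

/-- Applying a substitution to a term. -/
def Tm.subst (σ : Subst) : Tm → Tm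
  | .var x => σ x
  | .fn f ts => .fn f (ts.attach.map (fun t => Tm.subst σ t.1))
decreasing_by
  have := List.sizeOf_lt_of_mem t.2
  simp only [Tm.fn.sizeOf_spec]
  omega

/-- The identity substitution. -/
def Subst.id : Subst := Tm.var

/-- Composition of substitutions: `(Subst.comp θ γ) x = θ(γ(x))`. -/
def Subst.comp (θ γ : Subst) : Subst := fun x => (γ x).subst θ

/-- Free variables of a term. -/
def Tm.fv : Tm → Finset ℕ
  | .var x => {x}
  | .fn _ ts => (ts.attach.map (fun t => Tm.fv t.1)).foldr (· ∪ ·) ∅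
decreasing_by
  have := List.sizeOf_lt_of_mem t.2
  simp only [Tm.fn.sizeOf_spec]
  omega

/-- Function symbols occurring in a term. -/
def Tm.fns : Tm → Finset ℕ
  | .var _ => ∅
  | .fn f ts => insert f ((ts.attach.map (fun t => Tm.fns t.1)).foldr (· ∪ ·) ∅)
decreasing_by
  have := List.sizeOf_lt_of_mem t.2
  simp only [Tm.fn.sizeOf_spec]
  omega

/-- Atomic formulas `P(t1,...,tn)`. -/
structure Atom : Type where
  pred : ℕ
  args : List Tm

def Atom.subst (σ : Subst) (A : Atom) : Atom := ⟨A.pred, A.args.map (Tm.subst σ)⟩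

def Atom.fv (A : Atom) : Finset ℕ := (A.args.map Tm.fv).foldr (· ∪ ·) ∅

def Atom.fns (A : Atom) : Finset ℕ := (A.args.map Tm.fns).foldr (· ∪ ·) ∅

/-- Renaming the variables of an atom. -/
def Atom.rename (ρ : ℕ → ℕ) (A : Atom) : Atom := A.subst (fun x => .var (ρ x))

/-- `A.ext t'` is `A[t']`: add `t'` as an extra last argument of `A`. -/
def Atom.ext (A : Atom) (t : Tm) : Atom := ⟨A.pred, A.args ++ [t]⟩

def listFV (As : List Atom) : Finset ℕ := (As.map Atom.fv).foldr (· ∪ ·) ∅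

def listFns (As : List Atom) : Finset ℕ := (As.map Atom.fns).foldr (· ∪ ·) ∅

/-- Free variables of a multiset of atoms. -/
def mFV (G : Multiset Atom) : Finset ℕ := (G.map Atom.fv).sup

/-- A logic program: a finite list of axioms `κ : ∀x̄. body ⇒ head`
(each axiom is implicitly universally closed). -/
abbrev Prog := List (ℕ × List Atom × Atom)

def progFns (Φ : Prog) : Finset ℕ :=
  (Φ.map (fun r => r.2.2.fns ∪ listFns r.2.1)).foldr (· ∪ ·) ∅

/-! ### Proof terms (de Bruijn representation for bound proof variables) -/

inductive Pf : Type where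
  | const : ℕ → Pf           -- proof-term constants κ
  | bvar : ℕ → Pf            -- proof-term variables a (de Bruijn)
  | lam : Pf → Pf            -- λa.e
  | app : Pf → Pf → Pf       -- e e'

/-- Lift de Bruijn indices `≥ c` by `d`. -/
def Pf.lift (c d : ℕ) : Pf → Pf
  | .const k => .const k
  | .bvar i => if i < c then .bvar i else .bvar (i + d)
  | .lam p => .lam (p.lift (c+1) d)
  | .app p q => .app (p.lift c d) (q.lift c d)

/-- Substitute `q` for de Bruijn index `k` in a proof term. -/
def Pf.subst (k : ℕ) (q : Pf) : Pf → Pf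
  | .const c => .const c
  | .bvar i => if i < k then .bvar i else if i = k then q.lift 0 k else .bvar (i - 1)
  | .lam p => .lam (Pf.subst (k+1) q p)
  | .app p p' => .app (Pf.subst k q p) (Pf.subst k q p')

/-- Beta-reduction on proof terms: congruence closure of `(λa.p) p' →β [p'/a]p`. -/
inductive Beta : Pf → Pf → Prop where
  | beta (p q : Pf) : Beta (.app (.lam p) q) (p.subst 0 q)
  | appL {p p' q : Pf} : Beta p p' → Beta (.app p q) (.app p' q)
  | appR {p q q' : Pf} : Beta q q' → Beta (.app p q) (.app p q')
  | lam {p p' : Pf} : Beta p p' → Beta (.lam p) (.lam p')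

/-- A proof term is strongly normalizing if every β-reduction sequence from it is finite. -/
def Pf.SN (p : Pf) : Prop := Acc (fun a b => Beta b a) p

/-- β-normal proof terms. -/
def Pf.Normal (p : Pf) : Prop := ∀ q, ¬ Beta p q

/-- First-order proof terms: built from constants and variables by application only. -/
inductive Pf.FirstOrder : Pf → Prop where
  | const (κ : ℕ) : Pf.FirstOrder (.const κ)
  | bvar (a : ℕ) : Pf.FirstOrder (.bvar a)
  | app {p q : Pf} : Pf.FirstOrder p → Pf.FirstOrder q → Pf.FirstOrder (.app p q)

/-- `Pf.lams k p` is `λa1...λak. p`. -/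
def Pf.lams : ℕ → Pf → Pf
  | 0, p => p
  | n+1, p => .lam (Pf.lams n p)

/-- Apply a proof term to a list of proof terms, left associated. -/
def Pf.apps (p : Pf) : List Pf → Pf
  | [] => p
  | q :: qs => Pf.apps (.app p q) qs

/-- The proof term `λā.λb̄.(e2 b̄)(e1 ā)` produced by the cut rule
(`n` is the length of `ā`, `m` the length of `b̄`). -/
def cutTerm (n m : ℕ) (e₁ e₂ : Pf) : Pf :=
  Pf.lams (n + m) <|
    .app (Pf.apps (e₂.lift 0 (n+m)) ((List.range m).map (fun j => Pf.bvar (m - 1 - j))))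
         (Pf.apps (e₁.lift 0 (n+m)) ((List.range n).map (fun j => Pf.bvar (n + m - 1 - j))))

/-! ### Horn formulas as types -/

/-- Horn formulas `A1,...,An ⇒ B`, either unquantified (`horn`)
or universally closed over all their free term variables (`all`). -/
inductive Formula : Type where
  | horn : List Atom → Atom → Formula
  | all : List Atom → Atom → Formula

/-- The Horn-formulas-as-types typing judgment `e : F` relative to a program `Φ`. -/
inductive Derives (Φ : Prog) : Pf → Formula → Prop where
  | ax {κ : ℕ} {body : List Atom} {head : Atom} :
      (κ, body, head) ∈ Φ → Derives Φ (.const κ) (.all body head)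
  | gen {e : Pf} {body : List Atom} {head : Atom} :
      Derives Φ e (.horn body head) → Derives Φ e (.all body head)
  | inst {e : Pf} {body : List Atom} {head : Atom} (σ : Subst) :
      Derives Φ e (.all body head) →
      Derives Φ e (.horn (body.map (Atom.subst σ)) (head.subst σ))
  | cut {e₁ e₂ : Pf} {As Bs : List Atom} {D C : Atom} :
      Derives Φ e₁ (.horn As D) → Derives Φ e₂ (.horn (Bs ++ [D]) C) →
      Derives Φ (cutTerm As.length Bs.length e₁ e₂) (.horn (As ++ Bs) C)

/-! ### Reductions -/

def Unifies (γ : Subst) (A B : Atom) : Prop := A.subst γ = B.subst γ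

/-- `γ` is a most general unifier of `A` and `B`. -/
def IsMGU (γ : Subst) (A B : Atom) : Prop :=
  Unifies γ A B ∧ ∀ δ, Unifies δ A B → ∃ θ, δ = Subst.comp θ γ

/-- `(body, head)` is a freshly renamed copy of the axiom `κ` of `Φ`,
whose variables do not occur in the goal multiset `G`. -/
def FreshRuleFor (Φ : Prog) (κ : ℕ) (G : Multiset Atom)
    (body : List Atom) (head : Atom) : Prop :=
  ∃ (body₀ : List Atom) (head₀ : Atom) (ρ : ℕ → ℕ),
    (κ, body₀, head₀) ∈ Φ ∧ Function.Injective ρ ∧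
    body = body₀.map (Atom.rename ρ) ∧ head = head₀.rename ρ ∧
    Disjoint (listFV body ∪ head.fv) (mFV G)

/-- Term-matching (LP-TM) reduction step via axiom `κ`:
replace `Ai = σC` by `σB1,...,σBm`. -/
def TMStep (Φ : Prog) (κ : ℕ) (G G' : Multiset Atom) : Prop :=
  ∃ (body : List Atom) (head : Atom) (σ : Subst) (rest : Multiset Atom),
    (κ, body, head) ∈ Φ ∧ G = (head.subst σ) ::ₘ rest ∧
    G' = ↑(body.map (Atom.subst σ)) + rest

def TMred (Φ : Prog) (G G' : Multiset Atom) : Prop := ∃ κ, TMStep Φ κ G G'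

/-- `G` is in term-matching normal form. -/
def TMNF (Φ : Prog) (G : Multiset Atom) : Prop := ∀ G', ¬ TMred Φ G G'

/-- `Φ` is productive: every term-matching reduction sequence is finite. -/
def Productive (Φ : Prog) : Prop := ∀ G, Acc (fun a b => TMred Φ b a) G

/-- Unification (LP-Unif) reduction step via axiom `κ` with most general unifier `γ`. -/
def UnifStepL (Φ : Prog) (κ : ℕ) (γ : Subst) (G G' : Multiset Atom) : Prop :=
  ∃ (A : Atom) (rest : Multiset Atom) (body : List Atom) (head : Atom),
    G = A ::ₘ rest ∧ FreshRuleFor Φ κ G body head ∧ IsMGU γ head A ∧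
    G' = ↑(body.map (Atom.subst γ)) + rest.map (Atom.subst γ)

/-- Substitutional reduction step via axiom `κ` with most general unifier `γ`. -/
def SubStepL (Φ : Prog) (κ : ℕ) (γ : Subst) (G G' : Multiset Atom) : Prop :=
  ∃ (A : Atom) (rest : Multiset Atom) (body : List Atom) (head : Atom),
    G = A ::ₘ rest ∧ FreshRuleFor Φ κ G body head ∧ IsMGU γ head A ∧
    G' = G.map (Atom.subst γ)

/-- Stateful LP-Unif reduction on pairs (goal multiset, accumulated substitution). -/
def unifR (Φ : Prog) (p q : Multiset Atom × Subst) : Prop :=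
  ∃ κ γ, UnifStepL Φ κ γ p.1 q.1 ∧ q.2 = Subst.comp γ p.2

/-- Stateful LP-Struct reduction `→^μ·↪^1`: term-matching reduce to `→`-normal form,
then perform at most one substitutional step. -/
def structR (Φ : Prog) (p q : Multiset Atom × Subst) : Prop :=
  ∃ G', Relation.ReflTransGen (TMred Φ) p.1 G' ∧ TMNF Φ G' ∧
    ((q.1 = G' ∧ q.2 = p.2) ∨ ∃ κ γ, SubStepL Φ κ γ G' q.1 ∧ q.2 = Subst.comp γ p.2)

/-- A multiset of queries succeeds by LP-Unif reduction. -/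
def UnifSucc (Φ : Prog) (G : Multiset Atom) : Prop :=
  ∃ γ, Relation.ReflTransGen (unifR Φ) (G, Subst.id) (0, γ)

/-- A multiset of queries succeeds by LP-Struct reduction. -/
def StructSucc (Φ : Prog) (G : Multiset Atom) : Prop :=
  ∃ γ, Relation.ReflTransGen (structR Φ) (G, Subst.id) (0, γ)

/-- `Φ` is non-overlapping: heads of distinct axioms have no common instance. -/
def NonOverlapping (Φ : Prog) : Prop :=
  ∀ κ body head κ' body' head', (κ, body, head) ∈ Φ → (κ', body', head') ∈ Φ → κ ≠ κ' →
    ∀ σ δ : Subst, head.subst σ ≠ head'.subst δ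

/-! ### Realizability transformation -/

def ruleFV (body : List Atom) (head : Atom) : Finset ℕ := listFV body ∪ head.fv

/-- `extBody [A1,...,Am] [y1,...,ym] = [A1[y1],...,Am[ym]]`. -/
def extBody (As : List Atom) (ys : List ℕ) : List Atom :=
  List.zipWith (fun A y => A.ext (Tm.var y)) As ys

/-- Realizability transformation of a single axiom `κ : ∀x̄. A1,...,Am ⇒ B`
into `κ : ∀x̄∀ȳ. A1[y1],...,Am[ym] ⇒ B[f_κ(y1,...,ym)]` with fresh distinct `ȳ`. -/
def transRule (fsym : ℕ → ℕ) (κ : ℕ) (body : List Atom) (head : Atom) : List Atom × Atom :=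
  let N := (ruleFV body head).sup id + 1
  let ys := (List.range body.length).map (fun i => N + i)
  (extBody body ys, head.ext (.fn (fsym κ) (ys.map Tm.var)))

/-- The realizability transformation `F(Φ)`. -/
def transProg (fsym : ℕ → ℕ) (Φ : Prog) : Prog :=
  Φ.map (fun r => (r.1, transRule fsym r.1 r.2.1 r.2.2))

/-- `fsym` assigns a fresh function symbol `f_κ` to each proof-term constant `κ`. -/
def FreshSyms (fsym : ℕ → ℕ) (Φ : Prog) : Prop :=
  Function.Injective fsym ∧ ∀ κ, fsym κ ∉ progFns Φ

/-- The representation `⟦·⟧_φ` of first-order normal proof terms as first-order terms: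
`⟦a⟧_φ = φ(a)` and `⟦κ p1 ... pn⟧_φ = f_κ(⟦p1⟧_φ,...,⟦pn⟧_φ)`. -/
inductive PfRep (fsym : ℕ → ℕ) (φ : ℕ → Tm) : Pf → Tm → Prop where
  | bvar (a : ℕ) : PfRep fsym φ (.bvar a) (φ a)
  | app (κ : ℕ) (ps : List Pf) (ts : List Tm) (hlen : ps.length = ts.length)
      (h : ∀ pt ∈ ps.zip ts, PfRep fsym φ pt.1 pt.2) :
      PfRep fsym φ (Pf.apps (.const κ) ps) (.fn (fsym κ) ts)

/-- The map `[ȳ/ā]` sending the bound proof variables `a1,...,ak` (de Bruijn) of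
`λa1...ak.n` to the first-order variables `y1,...,yk`. -/
def mkPhi (ys : List ℕ) : ℕ → Tm := fun j => Tm.var (ys.getD (ys.length - 1 - j) 0)

/-!
Read an LP-Struct derivation backwards. A term-matching step replaces a goal `σC` by `σB̄`
for an axiom `κ : B̄ ⇒ C`, so derivations of the instances `δσB̄` cut against the instance
`δσ` of `κ` give one of `δσC`; a substitutional step only applies `γ₀` to all goals, so
derivations of the goals under `δ` after the step are derivations under `δ ∘ γ₀` before it.
Hence at every stage all goals are derivable under the substitution still to be accumulated,
and at the start that substitution is the final answer `γ`.
-/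

theorem Tm.subst_fn (σ : Subst) (f : ℕ) (ts : List Tm) :
    Tm.subst σ (.fn f ts) = .fn f (ts.map (Tm.subst σ)) := by
  rw [Tm.subst, List.attach_map_val]

theorem Tm.subst_id : ∀ t : Tm, t.subst Subst.id = t
  | .var _ => by rw [Tm.subst, Subst.id]
  | .fn f ts => by
      rw [Tm.subst_fn]
      congr 1
      conv_rhs => rw [← List.map_id ts]
      exact List.map_congr_left fun t ht => Tm.subst_id t
decreasing_by
  have := List.sizeOf_lt_of_mem ht
  simp only [Tm.fn.sizeOf_spec]
  omega

theorem Tm.subst_subst (δ σ : Subst) : ∀ t : Tm, (t.subst σ).subst δ = t.subst (Subst.comp δ σ)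
  | .var _ => by simp only [Tm.subst, Subst.comp]
  | .fn f ts => by
      rw [Tm.subst_fn, Tm.subst_fn, Tm.subst_fn, List.map_map]
      congr 1
      exact List.map_congr_left fun t ht => Tm.subst_subst δ σ t
decreasing_by
  have := List.sizeOf_lt_of_mem ht
  simp only [Tm.fn.sizeOf_spec]
  omega

theorem Atom.subst_subst (δ σ : Subst) (A : Atom) :
    (A.subst σ).subst δ = A.subst (Subst.comp δ σ) := by
  simp only [Atom.subst, List.map_map, Function.comp_def, Tm.subst_subst]

theorem Subst.comp_id (δ : Subst) : Subst.comp δ Subst.id = δ :=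
  funext fun x => by rw [Subst.comp, Subst.id, Tm.subst]

theorem Subst.id_comp (δ : Subst) : Subst.comp Subst.id δ = δ :=
  funext fun x => Tm.subst_id (δ x)

theorem Subst.comp_assoc (a b c : Subst) :
    Subst.comp a (Subst.comp b c) = Subst.comp (Subst.comp a b) c :=
  funext fun x => Tm.subst_subst a b (c x)

theorem Derives.horn_nil_of_premises {Φ : Prog} {e : Pf} {Bs : List Atom} {C : Atom}
    (he : Derives Φ e (.horn Bs C)) (hBs : ∀ B ∈ Bs, ∃ e', Derives Φ e' (.horn [] B)) :
    ∃ e', Derives Φ e' (.horn [] C) := by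
  induction Bs using List.reverseRecOn generalizing e with
  | nil => exact ⟨e, he⟩
  | append_singleton Bs D ih =>
      obtain ⟨eD, heD⟩ := hBs D (by simp)
      exact ih (by simpa using Derives.cut heD he) fun B hB => hBs B (by simp [hB])

def GoalsDerivable (Φ : Prog) (δ : Subst) (G : Multiset Atom) : Prop :=
  ∀ B ∈ G, ∃ e, Derives Φ e (.horn [] (B.subst δ))

namespace GoalsDerivable

variable {Φ : Prog} {δ : Subst} {G G' : Multiset Atom}

theorem of_tmRed (hstep : TMred Φ G G') (h' : GoalsDerivable Φ δ G') :
    GoalsDerivable Φ δ G := by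
  obtain ⟨κ, body, head, σ, rest, hκ, rfl, rfl⟩ := hstep
  intro B hB
  rcases Multiset.mem_cons.mp hB with rfl | hB
  · have hinst := Derives.inst (Subst.comp δ σ) (Derives.ax hκ)
    rw [← Atom.subst_subst] at hinst
    refine hinst.horn_nil_of_premises fun B' hB' => ?_
    obtain ⟨A', hA', rfl⟩ := List.mem_map.mp hB'
    rw [← Atom.subst_subst]
    exact h' _ (Multiset.mem_add.mpr (Or.inl (by simpa using ⟨A', hA', rfl⟩)))
  · exact h' B (Multiset.mem_add.mpr (Or.inr hB))

theorem of_tmPath (hpath : Relation.ReflTransGen (TMred Φ) G G')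
    (h' : GoalsDerivable Φ δ G') : GoalsDerivable Φ δ G := by
  induction hpath using Relation.ReflTransGen.head_induction_on with
  | refl => exact h'
  | head hstep _ ih => exact of_tmRed hstep ih

theorem of_map_subst {γ₀ : Subst} (h' : GoalsDerivable Φ δ (G.map (Atom.subst γ₀))) :
    GoalsDerivable Φ (Subst.comp δ γ₀) G := fun B hB => by
  simpa only [Atom.subst_subst] using h' _ (Multiset.mem_map_of_mem _ hB)

end GoalsDerivable

theorem exists_goalsDerivable_of_structR_path {Φ : Prog} {γ : Subst}
    {p : Multiset Atom × Subst} (h : Relation.ReflTransGen (structR Φ) p (0, γ)) :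
    ∃ δ, γ = Subst.comp δ p.2 ∧ GoalsDerivable Φ δ p.1 := by
  induction h using Relation.ReflTransGen.head_induction_on with
  | refl =>
      exact ⟨Subst.id, (Subst.id_comp γ).symm, fun B hB => absurd hB (Multiset.notMem_zero B)⟩
  | head hstep _ ih =>
      obtain ⟨G', hpath, -, hlast⟩ := hstep
      obtain ⟨δ, hγ, hder⟩ := ih
      rcases hlast with ⟨hq₁, hq₂⟩ | ⟨-, γ₀, ⟨-, -, -, -, -, -, -, hq₁⟩, hq₂⟩
      · rw [hq₁] at hder
        exact ⟨δ, hγ.trans (congrArg _ hq₂), hder.of_tmPath hpath⟩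
      · rw [hq₁] at hder
        refine ⟨Subst.comp δ γ₀, ?_, (GoalsDerivable.of_map_subst hder).of_tmPath hpath⟩
        rw [hγ, hq₂, Subst.comp_assoc]

theorem struct_sound_general (fsym : ℕ → ℕ) (Φ : Prog)
    (A : Atom) (y : ℕ) (γ : Subst)
    (h : Relation.ReflTransGen (structR (transProg fsym Φ))
      ({A.ext (Tm.var y)}, Subst.id) (0, γ)) :
    ∃ e : Pf, Derives (transProg fsym Φ) e (.all [] ((A.ext (Tm.var y)).subst γ)) := by
  obtain ⟨δ, hγ, hder⟩ := exists_goalsDerivable_of_structR_path h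
  rw [hγ.trans (Subst.comp_id δ)]
  obtain ⟨e, he⟩ := hder _ (Multiset.mem_singleton_self _)
  exact ⟨e, Derives.gen he⟩

/-- Soundness of LP-Struct: if `F(Φ) ⊢ {A[y]} (→^ν·↪^1)*_γ ∅`, then
there is a proof term `e` with `e : ∀x̄. ⇒ γ(A[y])` derivable from `F(Φ)`. -/
theorem struct_sound (fsym : ℕ → ℕ) (Φ : Prog) (hf : FreshSyms fsym Φ)
    (A : Atom) (y : ℕ) (hy : y ∉ A.fv) (γ : Subst)
    (h : Relation.ReflTransGen (structR (transProg fsym Φ))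
      ({A.ext (Tm.var y)}, Subst.id) (0, γ)) :
    ∃ e : Pf, Derives (transProg fsym Φ) e (.all [] ((A.ext (Tm.var y)).subst γ)) :=
  struct_sound_general fsym Φ A y γ h

end SRes
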